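/- If (v, w) is a pair of symmetric 4×4 complex matrices satisfying the G(3,6) relations, then rank w = 2 if and only if rank v = 2. -/

import Mathlib

/-- First element (in increasing order) of the complement of `{i, j}` in `{0, 1, 2, 3}`,
for `i < j` (junk value otherwise). -/
def cFst (i j : Fin 4) : Fin 4 :=
  if i = 0 ∧ j = 1 then 2
  else if i = 0 ∧ j = 2 then 1
  else if i = 0 ∧ j = 3 then 1
  else if i = 1 ∧ j = 2 then 0
  else if i = 1 ∧ j = 3 then 0
  else 0

/-- Second element (in increasing order) of the complement of `{i, j}` in `{0, 1, 2, 3}`,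
for `i < j` (junk value otherwise). -/
def cSnd (i j : Fin 4) : Fin 4 :=
  if i = 0 ∧ j = 1 then 3
  else if i = 0 ∧ j = 2 then 3
  else if i = 0 ∧ j = 3 then 2
  else if i = 1 ∧ j = 2 then 3
  else if i = 1 ∧ j = 3 then 2
  else 1

/-- Sign `ε(i,j)` of the permutation taking `(0,1,2,3)` to `(i, j, i', j')` where
`{i', j'}` is the complement of `{i, j}` listed in increasing order, for `i < j`. -/
def eps (i j : Fin 4) : ℂ :=
  if i = 0 ∧ j = 2 then -1 else if i = 1 ∧ j = 3 then -1 else 1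

/-- The `G(3,6)` relations for a pair of (symmetric) `4 × 4` complex matrices `(v, w)`:
(i) `v·w` is a scalar multiple of the identity; (ii) the `2 × 2` minors of `v` equal, up to
the signs `ε`, the complementary `2 × 2` minors of `w`. -/
def G36 (v w : Matrix (Fin 4) (Fin 4) ℂ) : Prop :=
  (∃ d : ℂ, v * w = d • (1 : Matrix (Fin 4) (Fin 4) ℂ)) ∧
  ∀ i j k l : Fin 4, i < j → k < l →
    v i k * v j l - v i l * v j k =
      eps i j * eps k l *
        (w (cFst i j) (cFst k l) * w (cSnd i j) (cSnd k l) -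
         w (cFst i j) (cSnd k l) * w (cSnd i j) (cFst k l))

/-!
If `rank w = 2` then `det w = 0`, so the scalar `d` with `v * w = d • 1` satisfies
`d ^ 4 = det v * det w = 0`; hence `v * w = 0` and `rank v ≤ 4 - rank w = 2`. Conversely `w`,
having rank `2`, has a nonzero `2 × 2` minor, and relation (ii) turns it into a nonzero
complementary minor of `v`, so `rank v ≥ 2`. For symmetric matrices the relations are symmetric
in `(v, w)`, which gives the other implication.
-/

namespace Matrix

variable {m n K : Type*} [Field K] [Fintype n]

theorem rank_le_one_of_forall_mul_eq_mul (A : Matrix m n K)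
    (h : ∀ i j k l, A i k * A j l = A i l * A j k) : A.rank ≤ 1 := by
  by_cases hA : ∃ a b, A a b ≠ 0
  · obtain ⟨a, b, hab⟩ := hA
    have hA : A = vecMulVec (fun i ↦ A i b) (fun k ↦ A a k / A a b) := by
      ext i k
      rw [vecMulVec_apply, mul_div_assoc', eq_div_iff hab, h i a k b]
    exact hA ▸ rank_vecMulVec_le _ _
  · push Not at hA
    simp [show A = 0 from ext hA, rank_zero]

theorem two_le_rank_of_mul_sub_mul_ne_zero (A : Matrix m n K) {i j : m} {k l : n}
    (h : A i k * A j l - A i l * A j k ≠ 0) : 2 ≤ A.rank := by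
  have hdet : (A.submatrix ![i, j] ![k, l]).det ≠ 0 := by rwa [det_fin_two]
  have := rank_submatrix_le A ![i, j] ![k, l]
  rwa [rank_of_det_ne_zero hdet, Fintype.card_fin] at this

theorem exists_mul_sub_mul_ne_zero_of_one_lt_rank [LinearOrder m] [LinearOrder n]
    (A : Matrix m n K) (hA : 1 < A.rank) :
    ∃ i j k l, i < j ∧ k < l ∧ A i k * A j l - A i l * A j k ≠ 0 := by
  by_contra! h
  have hcols : ∀ i j k l, i < j → A i k * A j l = A i l * A j k := by
    intro i j k l hij
    rcases lt_trichotomy k l with hkl | rfl | hkl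
    · exact sub_eq_zero.mp (h i j k l hij hkl)
    · rfl
    · exact (sub_eq_zero.mp (h i j l k hij hkl)).symm
  refine hA.not_ge (A.rank_le_one_of_forall_mul_eq_mul fun i j k l ↦ ?_)
  rcases lt_trichotomy i j with hij | rfl | hij
  · exact hcols i j k l hij
  · ring
  · linear_combination -hcols j i k l hij

end Matrix

open Matrix

theorem cFst_lt_cSnd {i j : Fin 4} (hij : i < j) : cFst i j < cSnd i j := by
  revert i j; decide

theorem cFst_cFst_cSnd {i j : Fin 4} (hij : i < j) : cFst (cFst i j) (cSnd i j) = i := by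
  revert i j; decide

theorem cSnd_cFst_cSnd {i j : Fin 4} (hij : i < j) : cSnd (cFst i j) (cSnd i j) = j := by
  revert i j; decide

theorem eps_cFst_cSnd {i j : Fin 4} (hij : i < j) : eps (cFst i j) (cSnd i j) = eps i j := by
  fin_cases i <;> fin_cases j <;> simp_all [eps, cFst, cSnd]

theorem eps_mul_self (i j : Fin 4) : eps i j * eps i j = 1 := by
  unfold eps; split_ifs <;> norm_num

theorem eps_ne_zero (i j : Fin 4) : eps i j ≠ 0 :=
  left_ne_zero_of_mul_eq_one (eps_mul_self i j)

namespace G36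

variable {v w : Matrix (Fin 4) (Fin 4) ℂ}

theorem minor_eq_eps_mul_minor (h : G36 v w) {i j k l : Fin 4} (hij : i < j) (hkl : k < l) :
    v (cFst i j) (cFst k l) * v (cSnd i j) (cSnd k l)
      - v (cFst i j) (cSnd k l) * v (cSnd i j) (cFst k l) =
      eps i j * eps k l * (w i k * w j l - w i l * w j k) := by
  have H := h.2 _ _ _ _ (cFst_lt_cSnd hij) (cFst_lt_cSnd hkl)
  rwa [cFst_cFst_cSnd hij, cSnd_cFst_cSnd hij, cFst_cFst_cSnd hkl,
    cSnd_cFst_cSnd hkl, eps_cFst_cSnd hij, eps_cFst_cSnd hkl] at H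

theorem symm (hv : v.IsSymm) (hw : w.IsSymm) (h : G36 v w) : G36 w v := by
  obtain ⟨d, hd⟩ := h.1
  refine ⟨⟨d, ?_⟩, fun i j k l hij hkl ↦ ?_⟩
  · rw [← hv.eq, ← hw.eq, ← transpose_mul, hd, transpose_smul, transpose_one]
  · rw [h.minor_eq_eps_mul_minor hij hkl]
    linear_combination -(w i k * w j l - w i l * w j k) *
      (eps_mul_self i j + eps i j * eps i j * eps_mul_self k l)

theorem mul_eq_zero_of_det_eq_zero (h : G36 v w) (hw : w.det = 0) : v * w = 0 := by
  obtain ⟨d, hd⟩ := h.1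
  have hd4 : d ^ 4 = 0 := by simpa [hw] using (congrArg det hd).symm
  rw [hd, pow_eq_zero_iff four_ne_zero |>.mp hd4, zero_smul]

theorem rank_eq_two_of_rank_eq_two (h : G36 v w) (hw : w.rank = 2) : v.rank = 2 := by
  have hdet : w.det = 0 := by
    by_contra hdet
    simp [rank_of_det_ne_zero hdet] at hw
  have hle : v.rank + w.rank ≤ 4 := by
    simpa using rank_add_rank_le_card_of_mul_eq_zero (h.mul_eq_zero_of_det_eq_zero hdet)
  obtain ⟨i, j, k, l, hij, hkl, hminor⟩ :=
    w.exists_mul_sub_mul_ne_zero_of_one_lt_rank (by omega)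
  have hge : 2 ≤ v.rank := v.two_le_rank_of_mul_sub_mul_ne_zero <|
    ne_of_eq_of_ne (h.minor_eq_eps_mul_minor hij hkl)
      (mul_ne_zero (mul_ne_zero (eps_ne_zero i j) (eps_ne_zero k l)) hminor)
  omega

end G36

/-- fact (I.4): if `(v, w)` is a pair of symmetric `4 × 4` complex matrices
satisfying the `G(3,6)` relations, then `rank w = 2` iff `rank v = 2`. -/
theorem stmt13 (v w : Matrix (Fin 4) (Fin 4) ℂ)
    (hv : v.IsSymm) (hw : w.IsSymm) (h : G36 v w) :
    w.rank = 2 ↔ v.rank = 2 :=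
  ⟨h.rank_eq_two_of_rank_eq_two, (h.symm hv hw).rank_eq_two_of_rank_eq_two⟩
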